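/- arXiv:2509.13491 — 2 statements merged into one kernel-verified Lean document; each statement's English description precedes it below -/
import Mathlib

section
/- Let C and D be preadditive categories whose hom-groups are ℚ-vector spaces with ℚ-bilinear composition (ℚ-linear categories), and let F : C ⥤ D be an additive, ℚ-linear functor that reflects isomorphisms (i.e. F is conservative: if F(f) is an isomorphism then f is an isomorphism). Let X be an object of C, m ≥ 1, and ρ : X ⟶ X an endomorphism with ρ^m = 𝟙_X. If F(ρ) = 𝟙_{F(X)}, then ρ = 𝟙_X. -/
open CategoryTheory

/-- If `F : C ⥤ D` is an additive `ℚ`-linear functor between `ℚ`-linear categories that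
reflects isomorphisms, `ρ : X ⟶ X` satisfies `ρ ^ m = 𝟙 X` for some `m ≥ 1`, and
`F ρ = 𝟙`, then `ρ = 𝟙 X`. -/
theorem conservative_finite_order_identity {C D : Type*} [Category C] [Category D]
    [Preadditive C] [Preadditive D] [CategoryTheory.Linear ℚ C] [CategoryTheory.Linear ℚ D]
    (F : C ⥤ D) [F.Additive] [F.Linear ℚ] [F.ReflectsIsomorphisms]
    (X : C) (m : ℕ) (hm : 1 ≤ m) (ρ : End X) (hρ : ρ ^ m = 1)
    (hF : F.map (ρ : X ⟶ X) = 𝟙 (F.obj X)) : ρ = 1 := by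
  have hm0 : (m : ℚ) ≠ 0 := by positivity
  -- F maps every power of ρ to the identity
  have hmap_pow : ∀ i : ℕ, F.map ((ρ ^ i : End X) : X ⟶ X) = 𝟙 (F.obj X) := by
    intro i
    induction i with
    | zero => rw [pow_zero]; exact F.map_id X
    | succ n ih =>
      have : (ρ ^ (n + 1) : End X) = (ρ : X ⟶ X) ≫ (ρ ^ n : End X) := by
        rw [pow_succ]; rfl
      rw [this, F.map_comp, hF, ih, Category.comp_id]
  set s : End X := ∑ i ∈ Finset.range m, ρ ^ i with hs
  -- ρ * s = s
  have hρs : ρ * s = s := by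
    have h1 := Finset.sum_range_succ' (fun i => ρ ^ i) m
    have h2 := Finset.sum_range_succ (fun i => ρ ^ i) m
    rw [h2, hρ, pow_zero] at h1
    have h3 : ∑ i ∈ Finset.range m, ρ ^ (i + 1) = s := by
      exact add_right_cancel h1.symm
    rw [Finset.mul_sum]
    calc ∑ i ∈ Finset.range m, ρ * ρ ^ i
        = ∑ i ∈ Finset.range m, ρ ^ (i + 1) := by
          refine Finset.sum_congr rfl fun i _ => ?_
          rw [pow_succ']
      _ = s := h3
  have hpow_s : ∀ i : ℕ, ρ ^ i * s = s := by
    intro i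
    induction i with
    | zero => rw [pow_zero, one_mul]
    | succ n ih => rw [pow_succ', mul_assoc, ih, hρs]
  have hss : s * s = (m : ℕ) • s := by
    rw [hs, Finset.sum_mul]
    calc ∑ i ∈ Finset.range m, ρ ^ i * s
        = ∑ _i ∈ Finset.range m, s := Finset.sum_congr rfl fun i _ => hpow_s i
      _ = (m : ℕ) • s := by rw [Finset.sum_const, Finset.card_range]
  set e : End X := (m : ℚ)⁻¹ • s with he
  -- F maps e to the identity
  have hFe : F.map (e : X ⟶ X) = 𝟙 (F.obj X) := by
    rw [he, F.map_smul, hs, F.map_sum]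
    rw [Finset.sum_congr rfl fun i _ => hmap_pow i]
    rw [Finset.sum_const, Finset.card_range]
    rw [← Nat.cast_smul_eq_nsmul ℚ, smul_smul, inv_mul_cancel₀ hm0, one_smul]
  -- e is an isomorphism by conservativity
  have : IsIso (F.map (e : X ⟶ X)) := by rw [hFe]; infer_instance
  have hiso : IsIso (e : X ⟶ X) := isIso_of_reflects_iso (e : X ⟶ X) F
  -- e is idempotent
  have hee : e * e = e := by
    have hmul : e * e = (m : ℚ)⁻¹ • ((m : ℚ)⁻¹ • (s * s)) := by
      rw [he]
      show ((m : ℚ)⁻¹ • s) ≫ ((m : ℚ)⁻¹ • s) = _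
      rw [Linear.smul_comp, Linear.comp_smul]
      rfl
    rw [hmul, hss, ← Nat.cast_smul_eq_nsmul ℚ, smul_smul, smul_smul, he]
    congr 1
    field_simp
  -- an idempotent isomorphism is the identity
  have he1 : e = 1 := by
    have : (e : X ⟶ X) ≫ (e : X ⟶ X) = 𝟙 X ≫ (e : X ⟶ X) := by
      rw [Category.id_comp]
      exact hee
    exact (cancel_mono (e : X ⟶ X)).mp this
  -- conclude
  have hρe : ρ * e = e := by
    rw [he]
    show ((m : ℚ)⁻¹ • s) ≫ (ρ : X ⟶ X) = (m : ℚ)⁻¹ • s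
    rw [Linear.smul_comp]
    exact congrArg (fun t => (m : ℚ)⁻¹ • t) hρs
  rw [he1, mul_one] at hρe
  exact hρe
end

section
/- Let L be a finitely generated free ℤ-module equipped with a bilinear form b : L × L → ℤ that is unimodular, meaning the induced map L → Hom_ℤ(L, ℤ), x ↦ b(x, −), is bijective. Let T ⊆ L be a submodule such that the quotient L/T is torsion-free. Then the restriction map L → Hom_ℤ(T, ℤ), x ↦ b(x, −)|_T, is surjective, and its kernel is the orthogonal complement T^⊥ = { x ∈ L : b(x, t) = 0 for all t ∈ T }. -/
/-!
The quotient `L ⧸ T` is finitely generated and torsion-free over the PID `ℤ`, hence free, so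
`T` is a direct summand of `L`: there is a retraction `l : L → T`. A functional `f` on `T` then
extends to the functional `f ∘ l` on `L`, which by unimodularity is `b x` for some `x`.
-/

namespace Submodule

variable {R M : Type*} [AddCommGroup M]

theorem exists_retraction_of_projective_quotient [Ring R] [Module R M] (N : Submodule R M)
    [Module.Projective R (M ⧸ N)] : ∃ l : M →ₗ[R] N, l ∘ₗ N.subtype = LinearMap.id :=
  ((LinearMap.exact_subtype_mkQ N).split_tfae N.injective_subtype N.mkQ_surjective |>.out 0 1).mp
    (Module.projective_lifting_property _ _ N.mkQ_surjective)

theorem exists_retraction_of_isTorsionFree_quotient [CommRing R] [IsDomain R]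
    [IsPrincipalIdealRing R] [Module R M] [Module.Finite R M] (N : Submodule R M)
    [Module.IsTorsionFree R (M ⧸ N)] : ∃ l : M →ₗ[R] N, l ∘ₗ N.subtype = LinearMap.id :=
  have : Module.Free R (M ⧸ N) := Module.free_of_finite_type_torsion_free'
  N.exists_retraction_of_projective_quotient

theorem surjective_domRestrict_of_retraction {P : Type*} [Semiring R] [AddCommMonoid P]
    [Module R M] [Module R P] {N : Submodule R M} {l : M →ₗ[R] N}
    (hl : l ∘ₗ N.subtype = LinearMap.id) :
    Function.Surjective fun f : M →ₗ[R] P => f.domRestrict N := fun g =>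
  ⟨g ∘ₗ l, LinearMap.ext fun x => congrArg g (LinearMap.congr_fun hl x)⟩

end Submodule

theorem unimodular_restriction_surjective_general {L : Type*} [AddCommGroup L] [Module ℤ L]
    [Module.Finite ℤ L]
    (b : L →ₗ[ℤ] L →ₗ[ℤ] ℤ) (hb : Function.Bijective fun x : L => b x)
    (T : Submodule ℤ L) (hT : NoZeroSMulDivisors ℤ (L ⧸ T)) :
    (Function.Surjective fun x : L => (b x).domRestrict T) ∧
      (∀ x : L, (b x).domRestrict T = 0 ↔ ∀ t ∈ T, b x t = 0) := by
  -- `hT` is about the action by `zsmul`, which agrees with the quotient module structure.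
  have : @Module.IsTorsionFree ℤ (L ⧸ T) _ _ (Submodule.Quotient.module T) :=
    Subsingleton.elim (AddCommGroup.toIntModule (L ⧸ T)) (Submodule.Quotient.module T) ▸
      inferInstance
  obtain ⟨l, hl⟩ := T.exists_retraction_of_isTorsionFree_quotient
  refine ⟨(Submodule.surjective_domRestrict_of_retraction hl).comp hb.2, fun x => ?_⟩
  simp [LinearMap.ext_iff]

/-- Let `L` be a finitely generated free `ℤ`-module with a unimodular bilinear form `b`
(i.e. `x ↦ b x` is a bijection `L → Hom_ℤ(L, ℤ)`), and let `T ⊆ L` be a submodule with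
torsion-free quotient. Then `x ↦ (b x)|_T` is a surjection `L → Hom_ℤ(T, ℤ)` whose
kernel is the orthogonal complement of `T`. -/
theorem unimodular_restriction_surjective {L : Type*} [AddCommGroup L] [Module ℤ L]
    [Module.Free ℤ L] [Module.Finite ℤ L]
    (b : L →ₗ[ℤ] L →ₗ[ℤ] ℤ) (hb : Function.Bijective fun x : L => b x)
    (T : Submodule ℤ L) (hT : NoZeroSMulDivisors ℤ (L ⧸ T)) :
    (Function.Surjective fun x : L => (b x).domRestrict T) ∧
      (∀ x : L, (b x).domRestrict T = 0 ↔ ∀ t ∈ T, b x t = 0) :=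
  unimodular_restriction_surjective_general b hb T hT
end
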